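/- Let a and b be coprime positive integers with a + b odd, and define Q(a;b) := 6·(s(a;2b) + s(2a;b) − 2·s(a;b)). Then b·Q(a;b) − a(1−3b)/2 is an integer; in particular b·Q(a;b) ∈ 1/2 + ℤ if a is odd and b even, and b·Q(a;b) ∈ ℤ if a is even and b odd. -/
import Mathlib

open Finset Real

/-- The classical Dedekind sum `s(a;b)` defined by the cotangent sum. -/
noncomputable def dedekindS (a : ℤ) (b : ℕ) : ℝ :=
  (1 / (4 * (b : ℝ))) * ∑ ν ∈ Finset.Ico 1 b,
    Real.cot (Real.pi * a * ν / b) * Real.cot (Real.pi * ν / b)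

/-- The rational part `Q(a;b)` of the elliptic classical Dedekind sum. -/
noncomputable def Qpart (a b : ℕ) : ℝ :=
  6 * (dedekindS a (2 * b) + dedekindS (2 * a) b - 2 * dedekindS a b)

noncomputable def zz (b : ℕ) : ℂ := Complex.exp (2 * Real.pi * Complex.I / b)
noncomputable def hC (b k : ℕ) : ℂ := (zz b ^ k + 1) / (zz b ^ k - 1)
noncomputable def sawR (n m : ℕ) : ℝ := if n ∣ m then 0 else ((m % n : ℕ) : ℝ) / n - 1 / 2

lemma zz_pow_eq_one_iff (b : ℕ) (hb : 0 < b) (k : ℕ) : zz b ^ k = 1 ↔ b ∣ k :=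
  (Complex.isPrimitiveRoot_exp b hb.ne').pow_eq_one_iff_dvd k

lemma zz_pow (b : ℕ) (hb : 0 < b) (k : ℕ) :
    zz b ^ k = Complex.exp (2 * ((Real.pi * k / b : ℝ) : ℂ) * Complex.I) := by
  rw [zz, ← Complex.exp_nat_mul]
  congr 1
  have hbC : (b : ℂ) ≠ 0 := Nat.cast_ne_zero.2 hb.ne'
  push_cast
  field_simp

lemma sin_ne (b : ℕ) (hb : 0 < b) (k : ℕ) (h : ¬ b ∣ k) :
    Real.sin (Real.pi * k / b) ≠ 0 := by
  have hbR : (b : ℝ) ≠ 0 := Nat.cast_ne_zero.2 hb.ne'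
  intro hs
  rw [Real.sin_eq_zero_iff] at hs
  obtain ⟨n, hn⟩ := hs
  have h1 : (n : ℝ) * b = k := by
    field_simp at hn
    nlinarith [Real.pi_pos, hn]
  have h2 : n * (b : ℤ) = (k : ℤ) := by exact_mod_cast h1
  exact h (Int.natCast_dvd_natCast.mp ⟨n, by rw [← h2]; ring⟩)

lemma cot_exp (θ : ℝ) (hs : Real.sin θ ≠ 0) :
    ((Real.cot θ : ℝ) : ℂ)
      = Complex.I * ((Complex.exp (2 * θ * Complex.I) + 1) / (Complex.exp (2 * θ * Complex.I) - 1)) := by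
  have hu : Complex.exp ((θ:ℂ) * Complex.I) ≠ 0 := Complex.exp_ne_zero _
  have h2 : Complex.exp (2 * (θ:ℂ) * Complex.I) = Complex.exp ((θ:ℂ) * Complex.I) ^ 2 := by
    rw [sq, ← Complex.exp_add]; ring_nf
  have hneg : Complex.exp (-(θ:ℂ) * Complex.I) = (Complex.exp ((θ:ℂ) * Complex.I))⁻¹ := by
    rw [← Complex.exp_neg]; ring_nf
  have hsinC : Complex.sin (θ : ℂ) ≠ 0 := by
    rw [← Complex.ofReal_sin]; exact_mod_cast hs
  have hden : Complex.exp (2 * (θ:ℂ) * Complex.I) - 1 ≠ 0 := by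
    rw [h2]
    intro hh
    rw [sub_eq_zero] at hh
    have hinv : (Complex.exp ((θ:ℂ) * Complex.I))⁻¹ = Complex.exp ((θ:ℂ) * Complex.I) :=
      inv_eq_of_mul_eq_one_right (by rw [← sq]; exact hh)
    apply hsinC
    rw [Complex.sin, hneg, hinv]
    ring
  have hcast : ((2 * θ * Complex.I : ℂ)) = 2 * (θ:ℂ) * Complex.I := by norm_num
  rw [Real.cot_eq_cos_div_sin, Complex.ofReal_div, Complex.ofReal_cos, Complex.ofReal_sin,
    hcast, mul_div_assoc', div_eq_div_iff hsinC hden, Complex.sin, Complex.cos, hneg, h2]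
  field_simp
  linear_combination (Complex.exp ((θ:ℂ) * Complex.I) ^ 4 - 1) * Complex.I_sq

lemma cot_eq (b : ℕ) (hb : 0 < b) (k : ℕ) :
    ((Real.cot (Real.pi * k / b) : ℝ) : ℂ) = Complex.I * hC b k := by
  by_cases h : b ∣ k
  · have h2 : zz b ^ k = 1 := (zz_pow_eq_one_iff b hb _).2 h
    obtain ⟨m, rfl⟩ := h
    have h1 : Real.pi * (b * m : ℕ) / b = m * Real.pi := by
      have hbR : (b : ℝ) ≠ 0 := Nat.cast_ne_zero.2 hb.ne'
      push_cast; field_simp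
    rw [h1, Real.cot_eq_cos_div_sin, Real.sin_nat_mul_pi]
    simp [hC, h2]
  · rw [cot_exp _ (sin_ne b hb k h), hC, ← zz_pow b hb k]

lemma geo (b : ℕ) (hb : 0 < b) (k : ℕ) :
    ∑ ν ∈ Finset.Ico 1 b, (zz b ^ k) ^ ν = if b ∣ k then (b : ℂ) - 1 else -1 := by
  have h0 : ∑ ν ∈ Finset.range b, (zz b ^ k) ^ ν
      = (if b ∣ k then (b:ℂ) else 0) := by
    by_cases h : b ∣ k
    · simp [h, (zz_pow_eq_one_iff b hb k).2 h]
    · have hne : zz b ^ k ≠ 1 := fun hh => h ((zz_pow_eq_one_iff b hb k).1 hh)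
      rw [geom_sum_eq hne]
      have : (zz b ^ k) ^ b = 1 := by
        rw [← pow_mul, mul_comm k b, pow_mul, (zz_pow_eq_one_iff b hb b).2 dvd_rfl, one_pow]
      simp [h, this]
  have h1 : ∑ ν ∈ Finset.range b, (zz b ^ k) ^ ν
      = 1 + ∑ ν ∈ Finset.Ico 1 b, (zz b ^ k) ^ ν := by
    rw [Finset.range_eq_Ico,
      ← Finset.sum_Ico_consecutive _ (by omega : (0:ℕ) ≤ 1) (by omega : 1 ≤ b)]
    simp
  rw [h1] at h0
  by_cases h : b ∣ k <;> simp [h] at h0 ⊢ <;> linear_combination h0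

lemma wgeo_aux (w : ℂ) (n : ℕ) :
    (w - 1) ^ 2 * ∑ i ∈ Finset.range n, (i : ℂ) * w ^ i
      = ((n : ℂ) - 1) * w ^ (n + 1) - (n : ℂ) * w ^ n + w := by
  induction n with
  | zero => simp
  | succ m ih =>
    rw [Finset.sum_range_succ, mul_add, ih]
    push_cast
    ring

lemma sum_id_complex (n : ℕ) : ∑ i ∈ Finset.range n, (i : ℂ) = n * (n - 1) / 2 := by
  induction n with
  | zero => simp
  | succ m ih => rw [Finset.sum_range_succ, ih]; push_cast; ring

lemma L5 (b : ℕ) (hb : 0 < b) (k : ℕ) :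
    ∑ ν ∈ Finset.Ico 1 b, (zz b ^ k) ^ ν * ((ν : ℂ) / b - 1 / 2) = hC b k / 2 := by
  have hbC : (b : ℂ) ≠ 0 := Nat.cast_ne_zero.2 hb.ne'
  have hIco : ∀ f : ℕ → ℂ, f 0 = 0 → ∑ ν ∈ Finset.Ico 1 b, f ν = ∑ ν ∈ Finset.range b, f ν := by
    intro f hf
    rw [Finset.range_eq_Ico,
      ← Finset.sum_Ico_consecutive _ (by omega : (0:ℕ) ≤ 1) (by omega : 1 ≤ b)]
    simp [hf]
  have hsumid : ∑ ν ∈ Finset.Ico 1 b, (ν : ℂ) = b * (b - 1) / 2 := by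
    rw [hIco (fun ν => (ν:ℂ)) (by simp), sum_id_complex]
  have hcard : (Finset.Ico 1 b).card = b - 1 := by simp
  have hcast : ((b - 1 : ℕ) : ℂ) = (b : ℂ) - 1 := by push_cast [Nat.cast_sub hb]; ring
  by_cases h : b ∣ k
  · have h1 : zz b ^ k = 1 := (zz_pow_eq_one_iff b hb k).2 h
    rw [h1]
    simp only [one_pow, one_mul, hC, h1, sub_self, div_zero, zero_div]
    rw [Finset.sum_sub_distrib, ← Finset.sum_div, hsumid, Finset.sum_const, hcard]
    rw [nsmul_eq_mul, hcast]
    field_simp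
    ring
  · have hne : zz b ^ k ≠ 1 := fun hh => h ((zz_pow_eq_one_iff b hb k).1 hh)
    have hwb : (zz b ^ k) ^ b = 1 := by
      rw [← pow_mul, mul_comm k b, pow_mul, (zz_pow_eq_one_iff b hb b).2 dvd_rfl, one_pow]
    have hgeo := geo b hb k
    have hwa := wgeo_aux (zz b ^ k) b
    obtain ⟨w, hwdef⟩ : ∃ w, zz b ^ k = w := ⟨_, rfl⟩
    rw [hwdef] at hne hwb hgeo hwa ⊢
    simp only [h, if_false] at hgeo
    have hw : w - 1 ≠ 0 := sub_ne_zero.2 hne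
    have hS : ∑ ν ∈ Finset.Ico 1 b, (ν : ℂ) * w ^ ν = b / (w - 1) := by
      rw [hIco _ (by simp), eq_div_iff hw]
      rw [pow_succ w b, hwb, one_mul] at hwa
      have h3 : (w - 1) * ((∑ ν ∈ Finset.range b, (ν : ℂ) * w ^ ν) * (w - 1) - b) = 0 := by
        linear_combination hwa
      rcases mul_eq_zero.1 h3 with h4 | h4
      · exact absurd h4 hw
      · linear_combination h4
    have expand : ∀ ν ∈ Finset.Ico 1 b, w ^ ν * ((ν:ℂ)/b - 1/2)
        = (1/b) * ((ν:ℂ) * w ^ ν) - (1/2) * w ^ ν := by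
      intro ν _
      field_simp
    rw [Finset.sum_congr rfl expand, Finset.sum_sub_distrib, ← Finset.mul_sum, ← Finset.mul_sum,
      hS, hgeo, hC, hwdef]
    field_simp
    ring

lemma pow_comm' (b μ ν : ℕ) : ((zz b) ^ μ) ^ ν = ((zz b) ^ ν) ^ μ := by
  rw [← pow_mul, ← pow_mul, mul_comm]

lemma not_dvd_of_Ico (b ν : ℕ) (hν : ν ∈ Finset.Ico 1 b) : ¬ b ∣ ν := by
  simp only [Finset.mem_Ico] at hν
  intro hd
  have := Nat.le_of_dvd (by omega) hd
  omega

lemma sum_hC (b : ℕ) (hb : 0 < b) : ∑ μ ∈ Finset.Ico 1 b, hC b μ = 0 := by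
  have h1 : ∀ μ ∈ Finset.Ico 1 b,
      hC b μ = 2 * ∑ ν ∈ Finset.Ico 1 b, ((zz b) ^ ν) ^ μ * ((ν : ℂ) / b - 1 / 2) := by
    intro μ _
    have h := L5 b hb μ
    rw [Finset.sum_congr rfl (fun ν _ => by rw [pow_comm' b μ ν])] at h
    linear_combination (-2) * h
  rw [Finset.sum_congr rfl h1, ← Finset.mul_sum, Finset.sum_comm]
  have h2 : ∀ ν ∈ Finset.Ico 1 b,
      ∑ μ ∈ Finset.Ico 1 b, ((zz b) ^ ν) ^ μ * ((ν : ℂ) / b - 1 / 2)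
        = -((ν : ℂ) / b - 1 / 2) := by
    intro ν hν
    rw [← Finset.sum_mul, geo b hb ν]
    simp [not_dvd_of_Ico b ν hν]
  rw [Finset.sum_congr rfl h2]
  have h3 := L5 b hb 0
  simp only [pow_zero, one_pow, one_mul, hC, sub_self, div_zero, zero_div] at h3
  rw [Finset.sum_neg_distrib, h3]
  ring

lemma L6 (b : ℕ) (hb : 0 < b) (m : ℕ) :
    ∑ μ ∈ Finset.Ico 1 b, (zz b ^ m) ^ μ * hC b μ = (-2 * b) * ((sawR b m : ℝ) : ℂ) := by
  have hbC : (b : ℂ) ≠ 0 := Nat.cast_ne_zero.2 hb.ne'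
  have hzzb : (zz b) ^ b = 1 := (zz_pow_eq_one_iff b hb b).2 dvd_rfl
  have hr : zz b ^ m = zz b ^ (m % b) := by
    conv_lhs => rw [← Nat.div_add_mod m b]
    rw [pow_add, pow_mul, hzzb, one_pow, one_mul]
  by_cases h : b ∣ m
  · have h1 : zz b ^ m = 1 := (zz_pow_eq_one_iff b hb m).2 h
    rw [h1]
    simp only [one_pow, one_mul, sum_hC b hb, sawR, h, if_true]
    simp
  · have h0 : 0 < m % b := Nat.pos_of_ne_zero fun hh => h (Nat.dvd_of_mod_eq_zero hh)
    have hrb : m % b < b := Nat.mod_lt m hb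
    have hpt : ∀ μ ∈ Finset.Ico 1 b,
        (zz b ^ (m % b)) ^ μ * hC b μ
          = hC b μ + (∑ j ∈ Finset.range (m % b), ((zz b) ^ μ) ^ j) * ((zz b) ^ μ + 1) := by
      intro μ hμ
      have hden : (zz b) ^ μ - 1 ≠ 0 :=
        sub_ne_zero.2 fun hh => (not_dvd_of_Ico b μ hμ) ((zz_pow_eq_one_iff b hb μ).1 hh)
      have hg := geom_sum_mul ((zz b) ^ μ) (m % b)
      rw [pow_comm' b (m % b) μ, hC]
      field_simp
      linear_combination (-((zz b) ^ μ + 1)) * hg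
    rw [hr, Finset.sum_congr rfl hpt, Finset.sum_add_distrib, sum_hC b hb, zero_add]
    have inner : ∀ μ ∈ Finset.Ico 1 b,
        (∑ j ∈ Finset.range (m % b), ((zz b) ^ μ) ^ j) * ((zz b) ^ μ + 1)
          = ∑ j ∈ Finset.range (m % b), (((zz b) ^ (j+1)) ^ μ + ((zz b) ^ j) ^ μ) := by
      intro μ _
      rw [Finset.sum_mul]
      refine Finset.sum_congr rfl (fun j _ => ?_)
      rw [mul_add, mul_one, ← pow_succ, pow_comm' b μ (j+1), pow_comm' b μ j]
    rw [Finset.sum_congr rfl inner, Finset.sum_comm]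
    have hval : ∀ j ∈ Finset.range (m % b),
        (∑ μ ∈ Finset.Ico 1 b, (((zz b) ^ (j+1)) ^ μ + ((zz b) ^ j) ^ μ))
          = (if j = 0 then (b:ℂ) else 0) + (-2) := by
      intro j hj
      simp only [Finset.mem_range] at hj
      rw [Finset.sum_add_distrib, geo b hb (j+1), geo b hb j]
      have hnd1 : ¬ b ∣ (j + 1) := fun hd => by have := Nat.le_of_dvd (by omega) hd; omega
      by_cases hj0 : j = 0
      · subst hj0
        simp [hnd1]
        ring
      · have hndj : ¬ b ∣ j := fun hd => by have := Nat.le_of_dvd (Nat.pos_of_ne_zero hj0) hd; omega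
        simp [hnd1, hndj, hj0]
        ring
    rw [Finset.sum_congr rfl hval, Finset.sum_add_distrib, Finset.sum_const, Finset.sum_ite_eq']
    simp only [Finset.mem_range, h0, if_pos, Finset.card_range, nsmul_eq_mul, sawR, h, if_false]
    push_cast
    field_simp
    ring

lemma lemA (a b : ℕ) (hb : 0 < b) :
    dedekindS a b = ∑ ν ∈ Finset.Ico 1 b, sawR b (a * ν) * ((ν : ℝ) / b - 1 / 2) := by
  have hbR : (b : ℝ) ≠ 0 := Nat.cast_ne_zero.2 hb.ne'
  have hbC : (b : ℂ) ≠ 0 := Nat.cast_ne_zero.2 hb.ne'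
  apply Complex.ofReal_injective
  have hfac : (-2 : ℂ) * b ≠ 0 := by simp [hbC]
  apply mul_left_cancel₀ hfac
  -- LHS
  have hL : ((dedekindS a b : ℝ) : ℂ)
      = (1 / (4 * (b:ℂ))) * ∑ ν ∈ Finset.Ico 1 b,
          (-1) * (hC b (a * ν) * hC b ν) := by
    rw [dedekindS, Complex.ofReal_mul, Complex.ofReal_sum]
    congr 1
    · push_cast; ring
    refine Finset.sum_congr rfl (fun ν hν => ?_)
    have e1 : Real.pi * ((a : ℤ) : ℝ) * (ν : ℝ) / b = Real.pi * ((a * ν : ℕ) : ℝ) / b := by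
      push_cast; ring
    rw [Complex.ofReal_mul, e1, cot_eq b hb (a * ν), cot_eq b hb ν]
    linear_combination hC b (a*ν) * hC b ν * Complex.I_sq
  -- RHS
  have hR : (-2 * (b:ℂ)) * ((∑ ν ∈ Finset.Ico 1 b, sawR b (a * ν) * ((ν : ℝ) / b - 1 / 2) : ℝ) : ℂ)
      = ∑ μ ∈ Finset.Ico 1 b, hC b μ * (hC b (a * μ) / 2) := by
    rw [Complex.ofReal_sum, Finset.mul_sum]
    have step1 : ∀ ν ∈ Finset.Ico 1 b,
        (-2 * (b:ℂ)) * ((sawR b (a * ν) * ((ν : ℝ) / b - 1 / 2) : ℝ) : ℂ)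
          = ∑ μ ∈ Finset.Ico 1 b, ((zz b ^ (a * ν)) ^ μ * hC b μ) * ((ν : ℂ) / b - 1 / 2) := by
      intro ν _
      rw [← Finset.sum_mul, L6 b hb (a * ν), Complex.ofReal_mul]
      push_cast
      ring
    rw [Finset.sum_congr rfl step1, Finset.sum_comm]
    refine Finset.sum_congr rfl (fun μ _ => ?_)
    have step2 : ∀ ν ∈ Finset.Ico 1 b,
        ((zz b ^ (a * ν)) ^ μ * hC b μ) * ((ν : ℂ) / b - 1 / 2)
          = hC b μ * ((zz b ^ (a * μ)) ^ ν * ((ν : ℂ) / b - 1 / 2)) := by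
      intro ν _
      rw [← pow_mul, ← pow_mul]
      rw [show a * ν * μ = a * μ * ν by ring]
      ring
    rw [Finset.sum_congr rfl step2, ← Finset.mul_sum, L5 b hb (a * μ)]
  -- combine
  rw [hL, hR, ← mul_assoc, Finset.mul_sum]
  refine Finset.sum_congr rfl (fun ν _ => ?_)
  field_simp
  ring

lemma sum_id_real (n : ℕ) : ∑ i ∈ Finset.range n, (i : ℝ) = n * (n - 1) / 2 := by
  induction n with
  | zero => simp
  | succ m ih => rw [Finset.sum_range_succ, ih]; push_cast; ring

lemma sum_sq_real (n : ℕ) : ∑ i ∈ Finset.range n, (i : ℝ) ^ 2 = n * (n - 1) * (2 * n - 1) / 6 := by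
  induction n with
  | zero => simp
  | succ m ih => rw [Finset.sum_range_succ, ih]; push_cast; ring

lemma Ico_eq_range (n : ℕ) (hn : 0 < n) (f : ℕ → ℝ) (hf : f 0 = 0) :
    ∑ ν ∈ Finset.Ico 1 n, f ν = ∑ ν ∈ Finset.range n, f ν := by
  rw [Finset.range_eq_Ico,
    ← Finset.sum_Ico_consecutive _ (by omega : (0:ℕ) ≤ 1) (by omega : 1 ≤ n)]
  simp [hf]

lemma lemC (c n : ℕ) (hn : 0 < n)
    (H : ∀ ν ∈ Finset.Ico 1 n, n ∣ c * ν → 2 * ν = n) :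
    ∑ ν ∈ Finset.Ico 1 n, sawR n (c * ν) * ((ν : ℝ) / n - 1 / 2)
      = (c:ℝ)*(n-1)*(2*n-1)/(6*n) - ((∑ ν ∈ Finset.Ico 1 n, (c*ν/n)*ν : ℕ) : ℝ)/n
        - (c:ℝ)*(n-1)/4 + ((∑ ν ∈ Finset.Ico 1 n, c*ν/n : ℕ) : ℝ)/2 := by
  have hnR : (n : ℝ) ≠ 0 := Nat.cast_ne_zero.2 hn.ne'
  have key : ∀ ν ∈ Finset.Ico 1 n, sawR n (c * ν) * ((ν : ℝ) / n - 1 / 2)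
      = ((c:ℝ)/(n:ℝ)^2) * (ν:ℝ)^2 - (1/(n:ℝ)) * (((c*ν/n : ℕ):ℝ) * ν)
        - (((c:ℝ)+1)/(2*n)) * ν + (1/2) * ((c*ν/n : ℕ):ℝ) + 1/4 := by
    intro ν hν
    simp only [Finset.mem_Ico] at hν
    have hmod : ((c*ν % n : ℕ) : ℝ) = (c:ℝ)*ν - (n:ℝ) * ((c*ν/n : ℕ):ℝ) := by
      have := Nat.mod_add_div (c*ν) n
      have hc : ((c*ν % n : ℕ) : ℝ) + (n:ℝ) * ((c*ν/n : ℕ):ℝ) = (c:ℝ)*ν := by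
        exact_mod_cast congrArg (Nat.cast : ℕ → ℝ) this
      linarith
    by_cases hd : n ∣ c * ν
    · have h2 : 2 * ν = n := H ν (Finset.mem_Ico.2 hν) hd
      have hνR : (ν:ℝ) ≠ 0 := Nat.cast_ne_zero.2 (by omega)
      have hn2 : (n:ℝ) = 2 * ν := by exact_mod_cast h2.symm
      have hν2 : ((ν:ℝ)/n - 1/2) = 0 := by
        rw [hn2]; field_simp; ring
      have hq : (n:ℝ) * ((c*ν/n : ℕ):ℝ) = (c:ℝ)*ν := by
        obtain ⟨t, ht⟩ := hd
        rw [ht, Nat.mul_div_cancel_left t hn]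
        exact_mod_cast ht.symm
      have h2q : (ν:ℝ) * (2 * ((c*ν/n : ℕ):ℝ)) = (ν:ℝ) * c := by
        linear_combination hq - ((c*ν/n : ℕ):ℝ) * hn2
      have hqv : ((c*ν/n : ℕ):ℝ) = (c:ℝ)/2 := by
        have := mul_left_cancel₀ hνR h2q
        linarith
      rw [hν2, mul_zero, hn2, hqv]
      field_simp
      ring
    · rw [sawR, if_neg hd, hmod]
      field_simp
      ring
  rw [Finset.sum_congr rfl key]
  rw [Finset.sum_add_distrib, Finset.sum_add_distrib, Finset.sum_sub_distrib,
    Finset.sum_sub_distrib, ← Finset.mul_sum, ← Finset.mul_sum, ← Finset.mul_sum,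
    ← Finset.mul_sum, Finset.sum_const, Nat.card_Ico]
  have hs1 : ∑ ν ∈ Finset.Ico 1 n, (ν:ℝ) = (n:ℝ) * (n - 1) / 2 := by
    rw [Ico_eq_range n hn _ (by simp), sum_id_real]
  have hs2 : ∑ ν ∈ Finset.Ico 1 n, (ν:ℝ)^2 = (n:ℝ) * (n - 1) * (2*n - 1) / 6 := by
    rw [Ico_eq_range n hn _ (by simp), sum_sq_real]
  have hG : ((∑ ν ∈ Finset.Ico 1 n, (c*ν/n)*ν : ℕ) : ℝ) = ∑ ν ∈ Finset.Ico 1 n, ((c*ν/n : ℕ):ℝ) * (ν:ℝ) := by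
    push_cast; rfl
  have hF : ((∑ ν ∈ Finset.Ico 1 n, c*ν/n : ℕ) : ℝ) = ∑ ν ∈ Finset.Ico 1 n, ((c*ν/n : ℕ):ℝ) := by
    push_cast; rfl
  rw [hs1, hs2, hG, hF, nsmul_eq_mul]
  have hcard : ((n - 1 : ℕ) : ℝ) = (n:ℝ) - 1 := by
    push_cast [Nat.cast_sub hn]; ring
  rw [hcard]
  field_simp
  ring

theorem Qpart_denominator (a b : ℕ) (ha : 0 < a) (hb : 0 < b) (hcop : Nat.gcd a b = 1)
    (hodd : Odd (a + b)) :
    (∃ z : ℤ, (b : ℝ) * Qpart a b - (a : ℝ) * (1 - 3 * b) / 2 = (z : ℝ)) ∧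
      (Odd a → Even b → ∃ z : ℤ, (b : ℝ) * Qpart a b = 1 / 2 + (z : ℝ)) ∧
      (Even a → Odd b → ∃ z : ℤ, (b : ℝ) * Qpart a b = (z : ℝ)) := by
  have hb2 : 0 < 2 * b := by omega
  have hbR : (b : ℝ) ≠ 0 := Nat.cast_ne_zero.2 hb.ne'
  have hcop' : Nat.Coprime b a := (Nat.coprime_comm.mp hcop)
  -- vanishing hypotheses
  have H3 : ∀ ν ∈ Finset.Ico 1 b, b ∣ a * ν → 2 * ν = b := by
    intro ν hν hd
    simp only [Finset.mem_Ico] at hν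
    have hdν : b ∣ ν := hcop'.dvd_of_dvd_mul_left hd
    have := Nat.le_of_dvd (by omega) hdν
    omega
  have H2 : ∀ ν ∈ Finset.Ico 1 b, b ∣ 2 * a * ν → 2 * ν = b := by
    intro ν hν hd
    simp only [Finset.mem_Ico] at hν
    have hd' : b ∣ a * (2 * ν) := by
      have : 2 * a * ν = a * (2 * ν) := by ring
      rwa [this] at hd
    have hdν : b ∣ 2 * ν := hcop'.dvd_of_dvd_mul_left hd'
    obtain ⟨t, ht⟩ := hdν
    match t, ht with
    | 0, ht => omega
    | 1, ht => omega
    | (t+2), ht =>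
      have : b * 2 ≤ b * (t + 2) := Nat.mul_le_mul_left b (by omega)
      omega
  have H1 : ∀ ν ∈ Finset.Ico 1 (2*b), 2*b ∣ a * ν → 2 * ν = 2*b := by
    intro ν hν hd
    simp only [Finset.mem_Ico] at hν
    rcases Nat.even_or_odd a with hae | hao
    · -- a even, so b odd not needed; a = 2a'
      obtain ⟨a', ha'⟩ := hae
      have hd' : b ∣ a' * ν := by
        have h2 : 2 * (a' * ν) = a * ν := by rw [ha']; ring
        have : 2 * b ∣ 2 * (a' * ν) := by rwa [h2]
        exact (mul_dvd_mul_iff_left (two_ne_zero)).mp this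
      have hcop'' : Nat.Coprime b a' := Nat.Coprime.coprime_dvd_right ⟨2, by omega⟩ hcop'
      have hdν : b ∣ ν := hcop''.dvd_of_dvd_mul_left hd'
      obtain ⟨t, ht⟩ := hdν
      match t, ht with
      | 0, ht => omega
      | 1, ht => omega
      | (t+2), ht =>
        have : b * 2 ≤ b * (t + 2) := Nat.mul_le_mul_left b (by omega)
        omega
    · -- a odd : coprime a 2b, contradiction
      have hc2 : Nat.Coprime a 2 := hao.coprime_two_right
      have hcab : Nat.Coprime (2*b) a := (Nat.Coprime.mul_right hc2 hcop).symm
      have hdν : 2*b ∣ ν := hcab.dvd_of_dvd_mul_left hd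
      have := Nat.le_of_dvd (by omega) hdν
      omega
  -- main identity
  have hcast2 : dedekindS (2 * (a:ℤ)) b = dedekindS ((2*a : ℕ) : ℤ) b := by norm_cast
  set S1 : ℕ := ∑ ν ∈ Finset.Ico 1 (2*b), (a*ν/(2*b))*ν with hS1
  set S2 : ℕ := ∑ ν ∈ Finset.Ico 1 b, (2*a*ν/b)*ν with hS2
  set S3 : ℕ := ∑ ν ∈ Finset.Ico 1 b, (a*ν/b)*ν with hS3
  set S4 : ℕ := ∑ ν ∈ Finset.Ico 1 (2*b), a*ν/(2*b) with hS4
  set S5 : ℕ := ∑ ν ∈ Finset.Ico 1 b, 2*a*ν/b with hS5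
  set S6 : ℕ := ∑ ν ∈ Finset.Ico 1 b, a*ν/b with hS6
  have hmain : (b : ℝ) * Qpart a b - (a : ℝ) * (1 - 3 * b) / 2
      = (((a:ℤ)*b^2 - 3*S1 - 6*S2 + 12*S3 + 3*b*((S4:ℤ) + S5 - 2*S6) : ℤ) : ℝ) := by
    rw [Qpart, hcast2, lemA a (2*b) hb2, lemA (2*a) b hb, lemA a b hb,
      lemC a (2*b) hb2 H1, lemC (2*a) b hb H2, lemC a b hb H3,
      ← hS1, ← hS2, ← hS3, ← hS4, ← hS5, ← hS6]
    push_cast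
    field_simp
    ring
  obtain ⟨Z, hmainZ⟩ : ∃ z : ℤ, (b : ℝ) * Qpart a b - (a : ℝ) * (1 - 3 * b) / 2 = (z : ℝ) :=
    ⟨_, hmain⟩
  refine ⟨⟨Z, hmainZ⟩, ?_, ?_⟩
  · intro hao hbe
    obtain ⟨s, hs⟩ := hao
    obtain ⟨r, hr⟩ := hbe
    refine ⟨Z + ((s:ℤ) - 6*r*s - 3*r), ?_⟩
    have hA : (a : ℝ) * (1 - 3 * b) = 2 * ((s:ℝ) - 6*r*s - 3*r) + 1 := by
      rw [hs, hr]; push_cast; ring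
    push_cast
    linarith [hmainZ, hA]
  · intro hae hbo
    obtain ⟨s, hs⟩ := hae
    refine ⟨Z + (s:ℤ)*(1 - 3*b), ?_⟩
    have hA : (a : ℝ) * (1 - 3 * b) = 2 * ((s:ℝ)*(1 - 3*(b:ℝ))) := by
      rw [hs]; push_cast; ring
    push_cast
    linarith [hmainZ, hA]
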